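/- arXiv:2511.12211 — 4 statements merged into one kernel-verified Lean document; each statement's English description precedes it below -/
import Mathlib

section
/- Let A and B be abelian categories, with A having enough injectives, and let F : A → B be an additive left exact functor. Assume there is an integer d ≥ 0 such that the classical right derived functors satisfy R^p F(M) = 0 for every object M of A and every p > d. Let c₁ be an integer, let K be a bounded-below cochain complex over A with H^i(K) = 0 for all i > c₁, and let K → I be a quasi-isomorphism into a bounded-below cochain complex I of injective objects of A. Then H^i(F(I)) = 0 for all i > c₁ + d, where F(I) denotes the complex obtained by applying F termwise to I. -/
open CategoryTheory Limits

universe v u v₂ u₂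

/-! Above `c₁` the complex `I` is exact, so for every `p ≥ c₁` its part in degrees `≥ p`,
reindexed by `ℕ`, is an injective resolution of `Z = ker (I^p → I^{p+1})`. Hence
`H^{p+n+1}(F I) ≅ R^{n+1} F (Z)`, which vanishes as soon as `n ≥ d`. -/

open HomologicalComplex

namespace CategoryTheory.InjectiveResolution

variable {C : Type*} [Category* C] [Abelian C]

noncomputable def ofExactAtSucc (X : CochainComplex C ℕ) [∀ n, Injective (X.X n)]
    (hX : ∀ n : ℕ, X.ExactAt (n + 1)) : InjectiveResolution (kernel (X.d 0 1)) where
  cocomplex := X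
  ι := (CochainComplex.fromSingle₀Equiv X _).symm ⟨kernel.ι _, kernel.condition _⟩
  quasiIso := ⟨fun n => by
    cases n with
    | zero =>
      rw [CochainComplex.quasiIsoAt₀_iff, ShortComplex.quasiIso_iff_of_zeros _ rfl rfl
        (X.shape 0 0 (by simp))]
      refine (ShortComplex.exact_and_mono_f_iff_of_iso
        (S₂ := ShortComplex.mk (kernel.ι (X.d 0 1)) _ (kernel.condition _)) ?_).2
        ⟨ShortComplex.exact_of_f_is_kernel _ (kernelIsKernel _),
          inferInstanceAs (Mono (kernel.ι _))⟩
      exact ShortComplex.isoMk (Iso.refl _) (Iso.refl _) (Iso.refl _)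
        (by simp [shortComplexFunctor'])
        (by simp [shortComplexFunctor'])
    | succ n =>
      rw [quasiIsoAt_iff_exactAt _ _ (CochainComplex.exactAt_succ_single_obj _ _)]
      exact hX n⟩

end CategoryTheory.InjectiveResolution

namespace CochainComplex

variable {C : Type*} [Category* C] [HasZeroMorphisms C] [CategoryWithHomology C]

noncomputable def restrictionEmbeddingUpIntGEHomologyIso (K : CochainComplex C ℤ) (p : ℤ)
    (n : ℕ) :
    (K.restriction (ComplexShape.embeddingUpIntGE p)).homology (n + 1) ≅ K.homology (p + n + 1) :=
  K.restrictionHomologyIso (ComplexShape.embeddingUpIntGE p) n (n + 1) (n + 2) (by simp) (by simp)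
    (i' := p + n) (k' := p + n + 1 + 1) (by simp) (by simp; ring) (by simp; ring) (by simp)
    (by simp)

lemma exactAt_restriction_embeddingUpIntGE_succ_iff (K : CochainComplex C ℤ) (p : ℤ) (n : ℕ) :
    (K.restriction (ComplexShape.embeddingUpIntGE p)).ExactAt (n + 1) ↔
      K.ExactAt (p + n + 1) := by
  simp only [exactAt_iff_isZero_homology]
  exact (K.restrictionEmbeddingUpIntGEHomologyIso p n).isZero_iff

end CochainComplex

namespace CategoryTheory.Functor

variable {A B : Type*} [Category* A] [Category* B] [Abelian A] [Abelian B]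
  [HasInjectiveResolutions A]

noncomputable def mapHomologicalComplexHomologyIsoRightDerived (F : A ⥤ B) [F.Additive]
    (J : CochainComplex A ℤ) [∀ i, Injective (J.X i)] (p : ℤ)
    (hJ : ∀ t, p < t → J.ExactAt t) (n : ℕ) :
    ((F.mapHomologicalComplex _).obj J).homology (p + n + 1) ≅
      (F.rightDerived (n + 1)).obj
        (Limits.kernel ((J.restriction (ComplexShape.embeddingUpIntGE p)).d 0 1)) :=
  have (m : ℕ) : Injective ((J.restriction (ComplexShape.embeddingUpIntGE p)).X m) :=
    inferInstanceAs (Injective (J.X _))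
  (CochainComplex.restrictionEmbeddingUpIntGEHomologyIso _ p n).symm ≪≫
    ((InjectiveResolution.ofExactAtSucc _ fun m =>
      (J.exactAt_restriction_embeddingUpIntGE_succ_iff p m).2 (hJ _ (by omega))).isoRightDerivedObj
        F (n + 1)).symm

end CategoryTheory.Functor

theorem homology_map_injective_resolution_isZero_of_rightDerived_bounded_general
    {A : Type u} [Category.{v} A] {B : Type u₂} [Category.{v₂} B]
    [Abelian A] [Abelian B] [EnoughInjectives A]
    (F : A ⥤ B) [F.Additive]
    (d : ℕ)
    (hd : ∀ (M : A) (p : ℕ), d < p → IsZero ((F.rightDerived p).obj M))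
    (c₁ : ℤ)
    (K I : CochainComplex A ℤ)
    (hK : ∀ i : ℤ, c₁ < i → IsZero (K.homology i))
    (hI : ∀ i : ℤ, Injective (I.X i))
    (φ : K ⟶ I) [QuasiIso φ] :
    ∀ i : ℤ, c₁ + (d : ℤ) < i →
      IsZero (((F.mapHomologicalComplex (ComplexShape.up ℤ)).obj I).homology i) := by
  intro j hj
  have hIexact (t : ℤ) (ht : c₁ < t) : I.ExactAt t :=
    (exactAt_iff_of_quasiIsoAt φ t).1 ((K.exactAt_iff_isZero_homology t).2 (hK t ht))
  obtain ⟨p, rfl⟩ : ∃ p : ℤ, j = p + d + 1 := ⟨j - d - 1, by omega⟩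
  exact (hd _ (d + 1) d.lt_succ_self).of_iso
    (F.mapHomologicalComplexHomologyIsoRightDerived I p (fun t ht => hIexact t (by omega)) d)

/-- **Bound on the cohomology of a derived functor applied to an injective resolution.**
Let `F : A ⥤ B` be an additive left exact functor between abelian categories, where `A`
has enough injectives, and suppose there is `d ≥ 0` with `R^p F (M) = 0` for every
object `M` and every `p > d`.  If `K` is a bounded-below cochain complex with
`H^i(K) = 0` for `i > c₁` and `K ⟶ I` is a quasi-isomorphism to a bounded-below complex
of injectives, then `H^i(F(I)) = 0` for all `i > c₁ + d`. -/
theorem homology_map_injective_resolution_isZero_of_rightDerived_bounded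
    {A : Type u} [Category.{v} A] {B : Type u₂} [Category.{v₂} B]
    [Abelian A] [Abelian B] [EnoughInjectives A]
    (F : A ⥤ B) [F.Additive] [PreservesFiniteLimits F]
    (d : ℕ)
    (hd : ∀ (M : A) (p : ℕ), d < p → IsZero ((F.rightDerived p).obj M))
    (c₁ : ℤ)
    (K I : CochainComplex A ℤ)
    (a : ℤ) (hKa : ∀ i : ℤ, i < a → IsZero (K.X i))
    (b : ℤ) (hIb : ∀ i : ℤ, i < b → IsZero (I.X i))
    (hK : ∀ i : ℤ, c₁ < i → IsZero (K.homology i))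
    (hI : ∀ i : ℤ, Injective (I.X i))
    (φ : K ⟶ I) [QuasiIso φ] :
    ∀ i : ℤ, c₁ + (d : ℤ) < i →
      IsZero (((F.mapHomologicalComplex (ComplexShape.up ℤ)).obj I).homology i) :=
  homology_map_injective_resolution_isZero_of_rightDerived_bounded_general F d hd c₁ K I hK hI φ
end

section
/- Let S be a topological space, let E be a complex Banach space, and let P : S → L(E) be a map into the bounded linear operators on E that is continuous for the operator norm. Assume that for every s ∈ S the operator P(s) is idempotent, i.e. P(s) ∘ P(s) = P(s), and has finite-dimensional range. Then the function sending s to the complex dimension of range(P(s)) is locally constant on S. -/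
/-!
If `P` is idempotent and `‖P - Q‖ < 1`, then `Q` is injective on `range P`: a vector `x = P x`
killed by `Q` satisfies `‖x‖ = ‖(P - Q) x‖ < ‖x‖` unless `x = 0`. Hence `rank P ≤ rank Q`, and
for two such idempotents the ranks agree. By continuity every `P t` with `t` near `s` is within
distance `1` of `P s`, so the rank is locally constant.
-/

open Module

namespace ContinuousLinearMap

variable {𝕜 E : Type*} [NontriviallyNormedField 𝕜] [NormedAddCommGroup E] [NormedSpace 𝕜 E]

lemma eq_zero_of_mem_range_of_norm_sub_lt_one {P Q : E →L[𝕜] E} (hP : IsIdempotentElem P)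
    (hPQ : ‖P - Q‖ < 1) {x : E} (hx : x ∈ LinearMap.range (P : E →ₗ[𝕜] E)) (hQx : Q x = 0) :
    x = 0 := by
  by_contra hx0
  have hPx : P x = x :=
    (LinearMap.IsIdempotentElem.mem_range_iff (IsIdempotentElem.toLinearMap hP)).1 hx
  have hle : ‖x‖ ≤ ‖P - Q‖ * ‖x‖ :=
    calc ‖x‖ = ‖(P - Q) x‖ := by rw [sub_apply, hQx, sub_zero, hPx]
      _ ≤ ‖P - Q‖ * ‖x‖ := le_opNorm _ _
  have hlt : ‖P - Q‖ * ‖x‖ < ‖x‖ := mul_lt_of_lt_one_left (norm_pos_iff.2 hx0) hPQ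
  linarith

lemma finrank_range_le_of_norm_sub_lt_one {P Q : E →L[𝕜] E} (hP : IsIdempotentElem P)
    (hPQ : ‖P - Q‖ < 1) [FiniteDimensional 𝕜 (LinearMap.range (Q : E →ₗ[𝕜] E))] :
    finrank 𝕜 (LinearMap.range (P : E →ₗ[𝕜] E)) ≤
      finrank 𝕜 (LinearMap.range (Q : E →ₗ[𝕜] E)) := by
  let f := (Q : E →ₗ[𝕜] E).restrict (p := LinearMap.range (P : E →ₗ[𝕜] E))
    (q := LinearMap.range (Q : E →ₗ[𝕜] E)) fun x _ ↦ LinearMap.mem_range_self _ x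
  have hf : Function.Injective f := by
    rw [← LinearMap.ker_eq_bot, LinearMap.ker_eq_bot']
    rintro ⟨x, hx⟩ hfx
    exact Subtype.ext <| eq_zero_of_mem_range_of_norm_sub_lt_one hP hPQ hx
      (congrArg Subtype.val hfx)
  exact LinearMap.finrank_le_finrank_of_injective hf

lemma finrank_range_eq_of_norm_sub_lt_one {P Q : E →L[𝕜] E} (hP : IsIdempotentElem P)
    (hQ : IsIdempotentElem Q) (hPQ : ‖P - Q‖ < 1)
    [FiniteDimensional 𝕜 (LinearMap.range (P : E →ₗ[𝕜] E))]
    [FiniteDimensional 𝕜 (LinearMap.range (Q : E →ₗ[𝕜] E))] :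
    finrank 𝕜 (LinearMap.range (P : E →ₗ[𝕜] E)) =
      finrank 𝕜 (LinearMap.range (Q : E →ₗ[𝕜] E)) :=
  (finrank_range_le_of_norm_sub_lt_one hP hPQ).antisymm
    (finrank_range_le_of_norm_sub_lt_one hQ (by rwa [norm_sub_rev]))

end ContinuousLinearMap

theorem isLocallyConstant_finrank_range_of_continuous_idempotents_general
    {S : Type*} [TopologicalSpace S]
    {E : Type*} [NormedAddCommGroup E] [NormedSpace ℂ E]
    (P : S → (E →L[ℂ] E)) (hP : Continuous P)
    (hidem : ∀ s : S, (P s).comp (P s) = P s)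
    (hfin : ∀ s : S, FiniteDimensional ℂ (LinearMap.range (P s : E →ₗ[ℂ] E))) :
    IsLocallyConstant (fun s : S => Module.finrank ℂ (LinearMap.range (P s : E →ₗ[ℂ] E))) := by
  refine (IsLocallyConstant.iff_eventually_eq _).2 fun s ↦ ?_
  filter_upwards [(hP.tendsto s).eventually (Metric.ball_mem_nhds (P s) one_pos)] with t ht
  rw [dist_eq_norm] at ht
  have := hfin s
  have := hfin t
  exact ContinuousLinearMap.finrank_range_eq_of_norm_sub_lt_one (hidem t) (hidem s) ht

/-- **Local constancy of the rank of a continuous family of finite-rank idempotents.**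
Let `S` be a topological space, `E` a complex Banach space, and `P : S → L(E)` a map into
the bounded linear operators on `E`, continuous for the operator norm, such that each
`P s` is idempotent with finite-dimensional range.  Then `s ↦ dim_ℂ range(P s)` is
locally constant on `S`. -/
theorem isLocallyConstant_finrank_range_of_continuous_idempotents
    {S : Type*} [TopologicalSpace S]
    {E : Type*} [NormedAddCommGroup E] [NormedSpace ℂ E] [CompleteSpace E]
    (P : S → (E →L[ℂ] E)) (hP : Continuous P)
    (hidem : ∀ s : S, (P s).comp (P s) = P s)
    (hfin : ∀ s : S, FiniteDimensional ℂ (LinearMap.range (P s : E →ₗ[ℂ] E))) :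
    IsLocallyConstant (fun s : S => Module.finrank ℂ (LinearMap.range (P s : E →ₗ[ℂ] E))) :=
  isLocallyConstant_finrank_range_of_continuous_idempotents_general P hP hidem hfin
end

section
/- Let S be a topological space, let E be a complex Banach space, and let P : S → L(E) be a map into the bounded linear operators on E that is continuous for the operator norm, such that for every s ∈ S the operator P(s) is idempotent (P(s) ∘ P(s) = P(s)) and has finite-dimensional range. Then for every point s₀ ∈ S there exists an open neighborhood U of s₀ in S such that for every s ∈ U, the restriction of P(s) to range(P(s₀)) is a linear isomorphism from range(P(s₀)) onto range(P(s)). -/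
/-!
If `p` is idempotent and `‖q - p‖ < 1`, then `q` is injective on `range p`: for `x = p x`
with `q x = 0` we get `‖x‖ = ‖(q - p) x‖ ≤ ‖q - p‖ ‖x‖`, forcing `x = 0`. For nearby idempotents
`P s` and `P s₀` this applies in both directions, so the two finite-dimensional ranges have
the same dimension and the injective restriction of `P s` to `range (P s₀)` is onto.
-/

namespace ContinuousLinearMap

variable {𝕜 E : Type*} [NontriviallyNormedField 𝕜] [NormedAddCommGroup E] [NormedSpace 𝕜 E]

abbrev restrictRange (p q : E →L[𝕜] E) :
    LinearMap.range (p : E →ₗ[𝕜] E) →ₗ[𝕜] LinearMap.range (q : E →ₗ[𝕜] E) :=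
  (q : E →ₗ[𝕜] E).restrict fun x _ => LinearMap.mem_range_self (q : E →ₗ[𝕜] E) x

theorem eq_zero_of_mem_range_of_norm_sub_lt_one_s8 {p q : E →L[𝕜] E} (hp : IsIdempotentElem p)
    (hpq : ‖q - p‖ < 1) {x : E} (hx : x ∈ LinearMap.range (p : E →ₗ[𝕜] E)) (hqx : q x = 0) :
    x = 0 := by
  have hpx : p x = x :=
    (LinearMap.IsIdempotentElem.mem_range_iff (IsIdempotentElem.toLinearMap hp)).mp hx
  have hle : ‖x‖ ≤ ‖q - p‖ * ‖x‖ := by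
    simpa [hpx, hqx] using (q - p).le_opNorm x
  by_contra hne
  linarith [mul_lt_of_lt_one_left (norm_pos_iff.mpr hne) hpq]

theorem injective_restrictRange_of_norm_sub_lt_one {p q : E →L[𝕜] E} (hp : IsIdempotentElem p)
    (hpq : ‖q - p‖ < 1) : Function.Injective (restrictRange p q) := by
  rw [← LinearMap.ker_eq_bot, LinearMap.ker_eq_bot']
  rintro ⟨x, hx⟩ hqx
  exact Subtype.ext <| eq_zero_of_mem_range_of_norm_sub_lt_one_s8 hp hpq hx congr($hqx.1)

theorem bijective_restrictRange_of_norm_sub_lt_one {p q : E →L[𝕜] E}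
    [FiniteDimensional 𝕜 (LinearMap.range (p : E →ₗ[𝕜] E))]
    [FiniteDimensional 𝕜 (LinearMap.range (q : E →ₗ[𝕜] E))]
    (hp : IsIdempotentElem p) (hq : IsIdempotentElem q) (hpq : ‖q - p‖ < 1) :
    Function.Bijective (restrictRange p q) := by
  have hinj := injective_restrictRange_of_norm_sub_lt_one hp hpq
  have hinj' := injective_restrictRange_of_norm_sub_lt_one hq (norm_sub_rev q p ▸ hpq)
  have hdim := le_antisymm (LinearMap.finrank_le_finrank_of_injective hinj)
    (LinearMap.finrank_le_finrank_of_injective hinj')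
  exact ⟨hinj, (LinearMap.injective_iff_surjective_of_finrank_eq_finrank hdim).mp hinj⟩

end ContinuousLinearMap

theorem restriction_isomorphism_of_continuous_idempotents_general
    {S : Type*} [TopologicalSpace S]
    {E : Type*} [NormedAddCommGroup E] [NormedSpace ℂ E]
    (P : S → (E →L[ℂ] E)) (hP : Continuous P)
    (hidem : ∀ s : S, (P s).comp (P s) = P s)
    (hfin : ∀ s : S, FiniteDimensional ℂ (LinearMap.range (P s : E →ₗ[ℂ] E)))
    (s₀ : S) :
    ∃ U : Set S, IsOpen U ∧ s₀ ∈ U ∧ ∀ s ∈ U,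
      Function.Bijective (fun x : LinearMap.range (P s₀ : E →ₗ[ℂ] E) =>
        (⟨P s x, LinearMap.mem_range_self (P s : E →ₗ[ℂ] E) (x : E)⟩ :
          LinearMap.range (P s : E →ₗ[ℂ] E))) := by
  refine ⟨{s | ‖P s - P s₀‖ < 1}, isOpen_lt (hP.sub continuous_const).norm continuous_const,
    by simp, fun s hs => ?_⟩
  have := hfin s
  have := hfin s₀
  exact ContinuousLinearMap.bijective_restrictRange_of_norm_sub_lt_one (hidem s₀) (hidem s) hs

/-- **Local triviality of the ranges of a continuous family of finite-rank idempotents.**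
Let `S` be a topological space, `E` a complex Banach space, and `P : S → L(E)` a norm
continuous map such that each `P s` is idempotent with finite-dimensional range.  Then
every `s₀ ∈ S` has an open neighbourhood `U` such that for every `s ∈ U` the restriction
of `P s` to `range (P s₀)` is a linear isomorphism from `range (P s₀)` onto
`range (P s)`. -/
theorem restriction_isomorphism_of_continuous_idempotents
    {S : Type*} [TopologicalSpace S]
    {E : Type*} [NormedAddCommGroup E] [NormedSpace ℂ E] [CompleteSpace E]
    (P : S → (E →L[ℂ] E)) (hP : Continuous P)
    (hidem : ∀ s : S, (P s).comp (P s) = P s)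
    (hfin : ∀ s : S, FiniteDimensional ℂ (LinearMap.range (P s : E →ₗ[ℂ] E)))
    (s₀ : S) :
    ∃ U : Set S, IsOpen U ∧ s₀ ∈ U ∧ ∀ s ∈ U,
      Function.Bijective (fun x : LinearMap.range (P s₀ : E →ₗ[ℂ] E) =>
        (⟨P s x, LinearMap.mem_range_self (P s : E →ₗ[ℂ] E) (x : E)⟩ :
          LinearMap.range (P s : E →ₗ[ℂ] E))) :=
  restriction_isomorphism_of_continuous_idempotents_general P hP hidem hfin s₀
end

section
/- Let E be a complex Banach space equipped with a finite grading, i.e. continuous linear projections π₀, …, π_m on E with π_i ∘ π_j = 0 for i ≠ j and π₀ + ⋯ + π_m = id, and set E_i = range(π_i). Let T and T' be bounded linear operators on E such that T preserves each E_i, and such that N := T' − T strictly raises the grading, i.e. N(E_i) ⊆ E_{i+1} + ⋯ + E_m for every i (in particular N(E_m) = 0). Then for every λ ∈ ℂ not in the spectrum of T, λ is not in the spectrum of T', and (λ·id − T')⁻¹ = (λ·id − T)⁻¹ ∘ ( Σ_{i=0}^{m} (N ∘ (λ·id − T)⁻¹)^i ). In particular the spectrum of T' is contained in the spectrum of T.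 -/
/-!
Write `R = (λ - T)⁻¹` and `N = T' - T`, so that `λ - T' = (1 - N R) (λ - T)`. Since `T` preserves
every `E_i` it commutes with the projections, hence so does `R`. Therefore `R` preserves the
filtration `F_k = E_k + ⋯ + E_m`, while `N` maps `F_k` into `F_{k+1}`; as `F_0 = E` and
`F_{m+1} = 0`, this gives `(N R)^(m+1) = 0`. So `1 - N R` is invertible, with inverse the finite
geometric series `∑_{i ≤ m} (N R)^i`.
-/

open Finset
open scoped Ring

theorem Commute.ringInverse_right {M₀ : Type*} [MonoidWithZero M₀] {a b : M₀} (h : Commute a b) :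
    Commute a b⁻¹ʳ := by
  by_cases hb : IsUnit b
  · obtain ⟨b, rfl⟩ := hb
    rw [Ring.inverse_unit]
    exact h.units_inv_right
  · rw [Ring.inverse_non_unit b hb]
    exact Commute.zero_right a

theorem Ring.isUnit_sub_and_inverse_sub_eq_mul_geom_sum {A : Type*} [Ring A] {u n : A}
    (hu : IsUnit u) {k : ℕ} (hk : (n * u⁻¹ʳ) ^ k = 0) :
    IsUnit (u - n) ∧ (u - n)⁻¹ʳ = u⁻¹ʳ * ∑ i ∈ range k, (n * u⁻¹ʳ) ^ i := by
  set v := n * u⁻¹ʳ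
  set s := ∑ i ∈ range k, v ^ i
  have hfactor : u - n = (1 - v) * u := by
    rw [sub_mul, one_mul, mul_assoc, Ring.inverse_mul_cancel u hu, mul_one]
  have hs_left : s * (1 - v) = 1 := by rw [geom_sum_mul_neg, hk, sub_zero]
  have hs_right : (1 - v) * s = 1 := by rw [mul_neg_geom_sum, hk, sub_zero]
  let w : Aˣ :=
    { val := (1 - v) * u
      inv := u⁻¹ʳ * s
      val_inv := by rw [mul_assoc, ← mul_assoc u, Ring.mul_inverse_cancel u hu, one_mul, hs_right]
      inv_val := by rw [mul_assoc, ← mul_assoc s, hs_left, one_mul, Ring.inverse_mul_cancel u hu] }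
  rw [hfactor]
  exact ⟨w.isUnit, Ring.inverse_unit w⟩

theorem CompleteOrthogonalIdempotents.commute_of_mul_mul_eq {A ι : Type*} [Semiring A] [Fintype ι]
    {e : ι → A} (he : CompleteOrthogonalIdempotents e) {a : A}
    (ha : ∀ j, e j * a * e j = a * e j) (i : ι) : Commute (e i) a := by
  have hvanish : ∀ j, j ≠ i → e i * a * e j = 0 := fun j hji => by
    rw [mul_assoc, ← ha j, ← mul_assoc, ← mul_assoc, he.ortho hji.symm, zero_mul, zero_mul]
  calc e i * a = ∑ j, e i * a * e j := by rw [← mul_sum, he.complete, mul_one]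
    _ = e i * a * e i := sum_eq_single i (fun j _ hji => hvanish j hji) (by simp)
    _ = a * e i := ha i

namespace ContinuousLinearMap

variable {R M : Type*} [Semiring R] [TopologicalSpace M] [AddCommMonoid M] [Module R M]

theorem mul_mul_eq_of_mapsTo_range {P T : M →L[R] M} (hP : IsIdempotentElem P)
    (hT : ∀ x ∈ LinearMap.range (P : M →ₗ[R] M), T x ∈ LinearMap.range (P : M →ₗ[R] M)) :
    P * T * P = T * P := by
  ext x
  obtain ⟨y, hy⟩ := hT (P x) ⟨x, rfl⟩
  change P (T (P x)) = T (P x)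
  rw [← hy]
  exact DFunLike.congr_fun hP y

theorem apply_mem_range_of_commute {P T : M →L[R] M} (h : Commute P T) {x : M}
    (hx : x ∈ LinearMap.range (P : M →ₗ[R] M)) : T x ∈ LinearMap.range (P : M →ₗ[R] M) := by
  obtain ⟨y, rfl⟩ := hx
  exact ⟨T y, DFunLike.congr_fun h.eq y⟩

theorem pow_eq_zero_of_mapsTo_succ {F : ℕ → Submodule R M} {f : M →L[R] M} {n : ℕ}
    (h_zero : F 0 = ⊤) (h_n : F n = ⊥) (hf : ∀ k, ∀ x ∈ F k, f x ∈ F (k + 1)) : f ^ n = 0 := by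
  have hpow : ∀ k x, (f ^ k) x ∈ F k := by
    intro k
    induction k with
    | zero => simp [h_zero]
    | succ k ih => exact fun x => by rw [pow_succ']; exact hf k _ (ih x)
  ext x
  simpa [h_n] using hpow n x

variable {n : ℕ} (π : Fin n → M →L[R] M)

def gradingFiltration (k : ℕ) : Submodule R M :=
  ⨆ (j : Fin n) (_ : k ≤ (j : ℕ)), LinearMap.range (π j : M →ₗ[R] M)

variable {π}

theorem range_le_gradingFiltration {j : Fin n} {k : ℕ} (h : k ≤ j) :
    LinearMap.range (π j : M →ₗ[R] M) ≤ gradingFiltration π k :=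
  le_iSup₂_of_le j h le_rfl

theorem gradingFiltration_antitone : Antitone (gradingFiltration π) := fun _ _ hkl =>
  iSup₂_le fun _ hj => range_le_gradingFiltration (hkl.trans hj)

theorem gradingFiltration_zero [ContinuousAdd M] (hsum : ∑ i, π i = 1) :
    gradingFiltration π 0 = ⊤ := by
  refine eq_top_iff.mpr fun x _ => ?_
  have hx : ∑ j, π j x = x := by
    rw [← _root_.sum_apply, hsum, one_apply_eq_self]
  rw [← hx]
  exact Submodule.sum_mem _ fun j _ => range_le_gradingFiltration (Nat.zero_le _) ⟨x, rfl⟩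

theorem gradingFiltration_self : gradingFiltration π n = ⊥ :=
  eq_bot_iff.mpr <| iSup₂_le fun j hj => absurd j.isLt (by omega)

theorem mapsTo_gradingFiltration {f : M →L[R] M} {d : ℕ}
    (hf : ∀ j, ∀ x ∈ LinearMap.range (π j : M →ₗ[R] M), f x ∈ gradingFiltration π (j + d))
    (k : ℕ) : ∀ x ∈ gradingFiltration π k, f x ∈ gradingFiltration π (k + d) := by
  suffices gradingFiltration π k ≤ (gradingFiltration π (k + d)).comap (f : M →ₗ[R] M) from
    fun x hx => this hx
  exact iSup₂_le fun j hj x hx =>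
    gradingFiltration_antitone (Nat.add_le_add_right hj d) (hf j x hx)

theorem pow_mul_eq_zero_of_raises_grading [ContinuousAdd M] (hsum : ∑ i, π i = 1)
    {N S : M →L[R] M}
    (hN : ∀ i, ∀ x ∈ LinearMap.range (π i : M →ₗ[R] M),
      N x ∈ (⨆ j > i, LinearMap.range (π j : M →ₗ[R] M) : Submodule R M))
    (hS : ∀ i, Commute (π i) S) : (N * S) ^ n = 0 := by
  have hN_succ := mapsTo_gradingFiltration (f := N) (d := 1) fun i x hx =>
    iSup₂_le (fun j hj => range_le_gradingFiltration (Fin.lt_def.mp hj)) (hN i x hx)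
  have hS_self := mapsTo_gradingFiltration (f := S) (d := 0) fun j x hx =>
    range_le_gradingFiltration le_rfl (apply_mem_range_of_commute (hS j) hx)
  exact pow_eq_zero_of_mapsTo_succ (gradingFiltration_zero hsum) gradingFiltration_self
    fun k x hx => hN_succ k _ (hS_self k x hx)

end ContinuousLinearMap

theorem spectrum_subset_of_graded_perturbation_general
    {E : Type*} [NormedAddCommGroup E] [NormedSpace ℂ E]
    (m : ℕ) (π : Fin (m + 1) → (E →L[ℂ] E))
    (horth : ∀ i j, i ≠ j → (π i).comp (π j) = 0)
    (hsum : ∑ i, π i = ContinuousLinearMap.id ℂ E)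
    (T T' : E →L[ℂ] E)
    (hT : ∀ (i) (x : E), x ∈ LinearMap.range (π i : E →ₗ[ℂ] E) → T x ∈ LinearMap.range (π i : E →ₗ[ℂ] E))
    (hN : ∀ (i) (x : E), x ∈ LinearMap.range (π i : E →ₗ[ℂ] E) →
      (T' - T) x ∈ (⨆ j > i, LinearMap.range (π j : E →ₗ[ℂ] E) : Submodule ℂ E)) :
    (∀ z : ℂ, z ∉ spectrum ℂ T →
      z ∉ spectrum ℂ T' ∧
      Ring.inverse (algebraMap ℂ (E →L[ℂ] E) z - T') =
        Ring.inverse (algebraMap ℂ (E →L[ℂ] E) z - T) *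
          ∑ i ∈ Finset.range (m + 1),
            ((T' - T) * Ring.inverse (algebraMap ℂ (E →L[ℂ] E) z - T)) ^ i) ∧
    spectrum ℂ T' ⊆ spectrum ℂ T := by
  have hπ : CompleteOrthogonalIdempotents π :=
    CompleteOrthogonalIdempotents.iff_ortho_complete.mpr ⟨horth, hsum⟩
  have hT_comm : ∀ i, Commute (π i) T :=
    hπ.commute_of_mul_mul_eq fun j =>
      ContinuousLinearMap.mul_mul_eq_of_mapsTo_range (hπ.idem j) (hT j)
  refine (and_iff_left_of_imp fun hres =>
    Set.compl_subset_compl.mp fun z hz => (hres z hz).1).mpr fun z hz => ?_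
  set u := algebraMap ℂ (E →L[ℂ] E) z - T
  have hu_comm : ∀ i, Commute (π i) u⁻¹ʳ := fun i =>
    ((Algebra.commute_algebraMap_right z (π i)).sub_right (hT_comm i)).ringInverse_right
  have hperturb : algebraMap ℂ (E →L[ℂ] E) z - T' = u - (T' - T) := by
    rw [sub_sub_sub_cancel_right]
  rw [spectrum.notMem_iff, hperturb]
  exact Ring.isUnit_sub_and_inverse_sub_eq_mul_geom_sum (spectrum.notMem_iff.mp hz)
    (ContinuousLinearMap.pow_mul_eq_zero_of_raises_grading hsum hN hu_comm)

/-- **Resolvents of graded perturbations.**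
Let `E` be a complex Banach space with a finite grading given by continuous linear
projections `π 0, …, π m` with `π i ∘ π j = 0` for `i ≠ j` and `π 0 + ⋯ + π m = id`, and
let `E_i = range (π i)`.  Let `T, T'` be bounded operators such that `T` preserves each
`E_i` and `N := T' − T` strictly raises the grading.  Then for every `λ ∉ spectrum T`,
`λ ∉ spectrum T'` and
`(λ − T')⁻¹ = (λ − T)⁻¹ ∘ (Σ_{i=0}^{m} (N ∘ (λ − T)⁻¹)^i)`.
In particular `spectrum T' ⊆ spectrum T`. -/
theorem spectrum_subset_of_graded_perturbation
    {E : Type*} [NormedAddCommGroup E] [NormedSpace ℂ E] [CompleteSpace E]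
    (m : ℕ) (π : Fin (m + 1) → (E →L[ℂ] E))
    (hproj : ∀ i, (π i).comp (π i) = π i)
    (horth : ∀ i j, i ≠ j → (π i).comp (π j) = 0)
    (hsum : ∑ i, π i = ContinuousLinearMap.id ℂ E)
    (T T' : E →L[ℂ] E)
    (hT : ∀ (i) (x : E), x ∈ LinearMap.range (π i : E →ₗ[ℂ] E) → T x ∈ LinearMap.range (π i : E →ₗ[ℂ] E))
    (hN : ∀ (i) (x : E), x ∈ LinearMap.range (π i : E →ₗ[ℂ] E) →
      (T' - T) x ∈ (⨆ j > i, LinearMap.range (π j : E →ₗ[ℂ] E) : Submodule ℂ E)) :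
    (∀ z : ℂ, z ∉ spectrum ℂ T →
      z ∉ spectrum ℂ T' ∧
      Ring.inverse (algebraMap ℂ (E →L[ℂ] E) z - T') =
        Ring.inverse (algebraMap ℂ (E →L[ℂ] E) z - T) *
          ∑ i ∈ Finset.range (m + 1),
            ((T' - T) * Ring.inverse (algebraMap ℂ (E →L[ℂ] E) z - T)) ^ i) ∧
    spectrum ℂ T' ⊆ spectrum ℂ T :=
  spectrum_subset_of_graded_perturbation_general m π horth hsum T T' hT hN
end
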